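/- arXiv:0807.3759 — 2 statements merged into one kernel-verified Lean document; each statement's English description precedes it below -/
import Mathlib

section
/- In ℤ[X], the ideal generated by (X² − 2)(X⁴ − 3X² + 1) and (X² − 2)·X³·(X² − 3) equals the principal ideal generated by X² − 2. Consequently the quotient ring ℤ[X]/((X² − 2)(X⁴ − 3X² + 1), (X² − 2)X³(X² − 3)) is isomorphic to ℤ[X]/(X² − 2), which is a free abelian group of rank 2. -/
/-!
The second generator factors as `(X² − 2) · X² · y` and the first as `(X² − 2)(X · y + 1)`
with `y = X(X² − 3)`. Since `X · y + 1` is coprime to both `X` and `y`, the cofactors generate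
the unit ideal, so the ideal is principal on `X² − 2`. As `X² − 2` is monic of degree 2, the
quotient has the ℤ-basis `1, X`.
-/

open Polynomial

theorem isCoprime_mul_add_one_pow_mul {R : Type*} [CommRing R] (x y : R) (n : ℕ) :
    IsCoprime (x * y + 1) (x ^ n * y) :=
  have hx : IsCoprime (x * y + 1) x := ⟨1, -y, by ring⟩
  have hy : IsCoprime (x * y + 1) y := ⟨1, -x, by ring⟩
  hx.pow_right.mul_right hy

theorem Ideal.span_mul_pair_eq_span_singleton {R : Type*} [CommSemiring R] {a b : R}
    (h : IsCoprime a b) (f : R) : Ideal.span {f * a, f * b} = Ideal.span {f} := by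
  apply le_antisymm
  · rw [Ideal.span_le]
    rintro p (rfl | rfl) <;> exact Ideal.mem_span_singleton.mpr (dvd_mul_right f _)
  · obtain ⟨u, v, huv⟩ := h
    rw [Ideal.span_le, Set.singleton_subset_iff, SetLike.mem_coe, Ideal.mem_span_pair]
    refine ⟨u, v, ?_⟩
    calc u * (f * a) + v * (f * b) = f * (u * a + v * b) := by ring
      _ = f := by rw [huv, mul_one]

theorem rank_quotient_span_eq_natDegree {R : Type*} [CommRing R] [StrongRankCondition R]
    {f : R[X]} (hf : f.Monic) : Module.rank R (R[X] ⧸ Ideal.span {f}) = f.natDegree := by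
  have := hf.finite_quotient
  rw [← Module.finrank_eq_rank, finrank_quotient_span_eq_natDegree' hf]

/-- In `ℤ[X]`, the ideal generated by `(X² − 2)(X⁴ − 3X² + 1)` and `(X² − 2)X³(X² − 3)` equals
the principal ideal generated by `X² − 2`; consequently the quotient by the former is isomorphic
to `ℤ[X]/(X² − 2)`, a free abelian group of rank 2. -/
theorem stmt3 :
    Ideal.span ({(X ^ 2 - 2) * (X ^ 4 - 3 * X ^ 2 + 1),
        (X ^ 2 - 2) * X ^ 3 * (X ^ 2 - 3)} : Set (Polynomial ℤ))
      = Ideal.span ({X ^ 2 - 2} : Set (Polynomial ℤ)) ∧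
    Nonempty ((Polynomial ℤ ⧸ Ideal.span ({(X ^ 2 - 2) * (X ^ 4 - 3 * X ^ 2 + 1),
        (X ^ 2 - 2) * X ^ 3 * (X ^ 2 - 3)} : Set (Polynomial ℤ)))
      ≃+* (Polynomial ℤ ⧸ Ideal.span ({X ^ 2 - 2} : Set (Polynomial ℤ)))) ∧
    Module.Free ℤ (Polynomial ℤ ⧸ Ideal.span ({X ^ 2 - 2} : Set (Polynomial ℤ))) ∧
    Module.rank ℤ (Polynomial ℤ ⧸ Ideal.span ({X ^ 2 - 2} : Set (Polynomial ℤ))) = 2 := by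
  have hcop : IsCoprime (X ^ 4 - 3 * X ^ 2 + 1 : ℤ[X]) (X ^ 3 * (X ^ 2 - 3)) := by
    have ha : (X ^ 4 - 3 * X ^ 2 + 1 : ℤ[X]) = X * (X * (X ^ 2 - 3)) + 1 := by ring
    have hb : (X ^ 3 * (X ^ 2 - 3) : ℤ[X]) = X ^ 2 * (X * (X ^ 2 - 3)) := by ring
    rw [ha, hb]
    exact isCoprime_mul_add_one_pow_mul X (X * (X ^ 2 - 3)) 2
  have hspan : Ideal.span ({(X ^ 2 - 2) * (X ^ 4 - 3 * X ^ 2 + 1),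
      (X ^ 2 - 2) * X ^ 3 * (X ^ 2 - 3)} : Set ℤ[X]) = Ideal.span {X ^ 2 - 2} := by
    simpa only [mul_assoc] using Ideal.span_mul_pair_eq_span_singleton hcop (X ^ 2 - 2)
  have hmonic : (X ^ 2 - 2 : ℤ[X]).Monic := by monicity!
  have hdeg : (X ^ 2 - 2 : ℤ[X]).natDegree = 2 := by compute_degree!
  refine ⟨hspan, ⟨Ideal.quotEquivOfEq hspan⟩, hmonic.free_quotient, ?_⟩
  rw [rank_quotient_span_eq_natDegree hmonic, hdeg, Nat.cast_ofNat]
end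

section
/- Let θ ∈ ℝ with θ not an integer multiple of π, and let A ∈ U(3) be the block-diagonal matrix diag(R_θ, 1), where R_θ is the 2×2 rotation matrix by angle θ. If B ∈ U(3) commutes with A, then B commutes with diag(R_t, 1) for every t ∈ ℝ. Equivalently, the centralizer of A in U(3) equals the centralizer of the whole embedded circle {diag(R_t, 1) : t ∈ ℝ}. -/
/-- The block-diagonal matrix `diag(R_θ, 1) ∈ U(3)`, where `R_θ` is the 2×2 rotation by `θ`. -/
noncomputable def rotMat (θ : ℝ) : Matrix (Fin 3) (Fin 3) ℂ :=
  !![(Real.cos θ : ℂ), (Real.sin θ : ℂ), 0;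
     (-Real.sin θ : ℂ), (Real.cos θ : ℂ), 0;
     0, 0, 1]

/-!
Write `R_t = 1 + sin t • J + (1 - cos t) • J²` with `J` the infinitesimal generator of the circle.
Since `R_θ⁻¹ = R_θᵀ` and `R_θ - R_θᵀ = 2 sin θ • J`, Cayley–Hamilton for `R_θ` (characteristic
polynomial `(x - 1)(x² - 2 cos θ x + 1)`) gives `(R_θ - 1) * (R_θ - (1 + 2 cos θ)) = -2 sin θ • J`, so when `sin θ ≠ 0` the generator `J` is a
polynomial in `R_θ`: whatever commutes with `R_θ` commutes with `J`, hence with every `R_t`.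
-/

def rotGen : Matrix (Fin 3) (Fin 3) ℂ :=
  !![0, 1, 0;
     -1, 0, 0;
     0, 0, 0]

lemma rotMat_eq (t : ℝ) :
    rotMat t = 1 + (Real.sin t : ℂ) • rotGen + (1 - Real.cos t : ℂ) • rotGen ^ 2 := by
  ext i j
  fin_cases i <;> fin_cases j <;> simp [rotMat, rotGen, sq]

lemma rotMat_sub_one_mul (θ : ℝ) :
    (rotMat θ - 1) * (rotMat θ - (1 + 2 * Real.cos θ : ℂ) • 1) = (-2 * Real.sin θ : ℂ) • rotGen := by
  ext i j
  fin_cases i <;> fin_cases j <;>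
    simp [rotMat, rotGen, Matrix.mul_apply, Fin.sum_univ_three, Matrix.one_apply] <;>
    grind [Complex.sin_sq_add_cos_sq]

lemma commute_rotGen_of_commute_rotMat {θ : ℝ} (hθ : Real.sin θ ≠ 0)
    {B : Matrix (Fin 3) (Fin 3) ℂ} (h : Commute B (rotMat θ)) : Commute B rotGen := by
  have hpoly : Commute B ((rotMat θ - 1) * (rotMat θ - (1 + 2 * Real.cos θ : ℂ) • 1)) :=
    ((h.sub_right (Commute.one_right B)).mul_right
      (h.sub_right ((Commute.one_right B).smul_right _)))
  rw [rotMat_sub_one_mul] at hpoly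
  refine (Commute.smul_right_iff₀ ?_).mp hpoly
  exact mul_ne_zero (by norm_num) (Complex.ofReal_ne_zero.mpr hθ)

lemma commute_rotMat_of_commute_rotGen {B : Matrix (Fin 3) (Fin 3) ℂ} (h : Commute B rotGen)
    (t : ℝ) : Commute B (rotMat t) := by
  rw [rotMat_eq]
  exact ((Commute.one_right B).add_right (h.smul_right _)).add_right ((h.pow_right 2).smul_right _)

theorem stmt15_general (θ : ℝ) (hθ : ∀ m : ℤ, θ ≠ m * Real.pi)
    (B : Matrix (Fin 3) (Fin 3) ℂ)
    (hcomm : B * rotMat θ = rotMat θ * B) :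
    ∀ t : ℝ, B * rotMat t = rotMat t * B := by
  have hsin : Real.sin θ ≠ 0 := fun h ↦
    let ⟨m, hm⟩ := Real.sin_eq_zero_iff.mp h
    hθ m hm.symm
  exact commute_rotMat_of_commute_rotGen (commute_rotGen_of_commute_rotMat hsin hcomm)

/-- If `θ` is not an integer multiple of `π` and a unitary `B ∈ U(3)` commutes with
`diag(R_θ, 1)`, then `B` commutes with `diag(R_t, 1)` for every real `t`. -/
theorem stmt15 (θ : ℝ) (hθ : ∀ m : ℤ, θ ≠ m * Real.pi)
    (B : Matrix (Fin 3) (Fin 3) ℂ) (hB : B ∈ Matrix.unitaryGroup (Fin 3) ℂ)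
    (hcomm : B * rotMat θ = rotMat θ * B) :
    ∀ t : ℝ, B * rotMat t = rotMat t * B :=
  stmt15_general θ hθ B hcomm
end
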